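/- arXiv:2605.05610 — 2 statements merged into one kernel-verified Lean document; each statement's English description precedes it below -/
import Mathlib

section
/- Let σ ≥ 0, 0 ≤ τ ≤ σ, and 0 < ρ < 1. Suppose the sequence (ψ̂_ρ(ℓ))_{ℓ≥1} of real numbers satisfies |1 − ψ̂_ρ(ℓ)| ≤ c₁ (ρℓ)^σ for 1 ≤ ℓ ≤ ℓ_ρ := ⌊ρ^{-1} − 1⌋, and |ψ̂_ρ(ℓ)| ≤ c₂ for ℓ > ℓ_ρ. Then there is a constant C depending only on c₁, c₂, σ, τ (not on ρ) such that for every ℓ ≥ 1, (1 + ℓ(ℓ+1))^τ |1 − ψ̂_ρ(ℓ)|² ≤ C ρ^{2(σ−τ)} (1 + ℓ(ℓ+1))^σ. -/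
/-!
Write `a = 1 + ℓ(ℓ+1)` and `s = σ - τ ≥ 0`. Since `ρ^{2s} a^σ = (ρ² a)^s a^τ`, the estimate
says `|1 - ψ̂_ρ(ℓ)|² ≤ C (ρ² a)^s`. For `ρ(ℓ+1) ≤ 1` the hypothesis gives
`|1 - ψ̂_ρ(ℓ)|² ≤ c₁² (ρℓ)^{2σ}`, and `(ρℓ)^{2σ} ≤ (ρℓ)^{2s} ≤ (ρ² a)^s` because `ρℓ ≤ 1` and
`ℓ² ≤ a`. For `ρ(ℓ+1) > 1` one has `ρ² a > 1/2`, so `(2ρ² a)^s ≥ 1` absorbs the bound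
`|1 - ψ̂_ρ(ℓ)|² ≤ (1 + c₂)²`.
-/

open Real

lemma rpow_mul_le_of_le_mul_sq_mul_rpow {a ρ e C σ τ : ℝ} (ha : 0 < a) (hρ : 0 ≤ ρ)
    (h : e ≤ C * (ρ ^ 2 * a) ^ (σ - τ)) :
    a ^ τ * e ≤ C * ρ ^ (2 * (σ - τ)) * a ^ σ := by
  have hsplit : ρ ^ (2 * (σ - τ)) * a ^ σ = (ρ ^ 2 * a) ^ (σ - τ) * a ^ τ := by
    rw [mul_rpow (by positivity) ha.le, ← rpow_natCast_mul hρ, Nat.cast_ofNat, mul_assoc,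
      ← rpow_add ha, sub_add_cancel]
  calc a ^ τ * e ≤ a ^ τ * (C * (ρ ^ 2 * a) ^ (σ - τ)) := by gcongr
    _ = C * ρ ^ (2 * (σ - τ)) * a ^ σ := by rw [mul_assoc C, hsplit]; ring

lemma sq_abs_le_of_abs_le_mul_rpow {y b c e σ s : ℝ} (hy0 : 0 ≤ y) (hy1 : y ≤ 1) (hs : 0 ≤ s)
    (hsσ : s ≤ σ) (hyb : y ^ 2 ≤ b) (he : |e| ≤ c * y ^ σ) :
    |e| ^ 2 ≤ c ^ 2 * b ^ s :=
  calc |e| ^ 2 ≤ (c * y ^ σ) ^ 2 := by gcongr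
    _ = c ^ 2 * (y ^ 2) ^ σ := by rw [mul_pow, rpow_pow_comm hy0]
    _ ≤ c ^ 2 * (y ^ 2) ^ s := mul_le_mul_of_nonneg_left
      (rpow_le_rpow_of_exponent_ge' (by positivity) (pow_le_one₀ hy0 hy1) hs hsσ) (sq_nonneg c)
    _ ≤ c ^ 2 * b ^ s := by gcongr

lemma sq_abs_le_of_abs_le_of_half_le {b e M s : ℝ} (hs : 0 ≤ s) (hb : 1 / 2 ≤ b)
    (he : |e| ≤ M) : |e| ^ 2 ≤ M ^ 2 * 2 ^ s * b ^ s := by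
  have hone : 1 ≤ (2 : ℝ) ^ s * b ^ s := by
    rw [← mul_rpow zero_le_two (by linarith)]
    exact one_le_rpow (by linarith) hs
  calc |e| ^ 2 ≤ M ^ 2 := by gcongr
    _ ≤ M ^ 2 * (2 ^ s * b ^ s) := le_mul_of_one_le_right (sq_nonneg M) hone
    _ = M ^ 2 * 2 ^ s * b ^ s := by ring

lemma le_floor_inv_sub_one_iff {ρ : ℝ} (hρ : 0 < ρ) {ℓ : ℕ} (hℓ : ℓ ≠ 0) :
    ℓ ≤ ⌊ρ⁻¹ - 1⌋₊ ↔ ρ * (ℓ + 1) ≤ 1 := by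
  rw [Nat.le_floor_iff' hℓ, le_sub_iff_add_le, ← le_inv_mul_iff₀ hρ, mul_one]

theorem multiplier_pointwise_estimate_general (σ τ c₁ c₂ : ℝ)
    (hτ0 : 0 ≤ τ) (hτσ : τ ≤ σ) (hc₁ : 0 < c₁) :
    ∃ C : ℝ, 0 < C ∧ ∀ ρ : ℝ, 0 < ρ → ρ < 1 → ∀ ψ : ℕ → ℝ,
      (∀ ℓ : ℕ, 1 ≤ ℓ → ℓ ≤ ⌊ρ⁻¹ - 1⌋₊ → |1 - ψ ℓ| ≤ c₁ * (ρ * ℓ) ^ σ) →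
      (∀ ℓ : ℕ, ⌊ρ⁻¹ - 1⌋₊ < ℓ → |ψ ℓ| ≤ c₂) →
      ∀ ℓ : ℕ, 1 ≤ ℓ →
        (1 + (ℓ : ℝ) * (ℓ + 1)) ^ τ * |1 - ψ ℓ| ^ 2 ≤
          C * ρ ^ (2 * (σ - τ)) * (1 + (ℓ : ℝ) * (ℓ + 1)) ^ σ := by
  refine ⟨c₁ ^ 2 + (1 + c₂) ^ 2 * 2 ^ (σ - τ), by positivity,
    fun ρ hρ _ ψ hlow hhigh ℓ hℓ => rpow_mul_le_of_le_mul_sq_mul_rpow (by positivity) hρ.le ?_⟩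
  set a : ℝ := 1 + (ℓ : ℝ) * (ℓ + 1)
  have hs : 0 ≤ σ - τ := sub_nonneg.2 hτσ
  have hfloor := le_floor_inv_sub_one_iff hρ (Nat.one_le_iff_ne_zero.1 hℓ)
  rcases le_or_gt (ρ * (ℓ + 1)) 1 with hsmall | hlarge
  · have hρℓ : ρ * ℓ ≤ 1 := by linarith
    have hρℓa : (ρ * ℓ) ^ 2 ≤ ρ ^ 2 * a := by nlinarith
    calc |1 - ψ ℓ| ^ 2 ≤ c₁ ^ 2 * (ρ ^ 2 * a) ^ (σ - τ) :=
          sq_abs_le_of_abs_le_mul_rpow (by positivity) hρℓ hs (by linarith) hρℓa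
            (hlow ℓ hℓ (hfloor.2 hsmall))
      _ ≤ _ := by gcongr; exact le_add_of_nonneg_right (by positivity)
  · have hρa : 1 / 2 ≤ ρ ^ 2 * a := by nlinarith
    have hψ : |1 - ψ ℓ| ≤ 1 + c₂ := by
      have := hhigh ℓ (not_le.1 (mt hfloor.1 (not_le.2 hlarge)))
      linarith [abs_sub (1 : ℝ) (ψ ℓ), abs_one (α := ℝ)]
    calc |1 - ψ ℓ| ^ 2 ≤ (1 + c₂) ^ 2 * 2 ^ (σ - τ) * (ρ ^ 2 * a) ^ (σ - τ) :=
          sq_abs_le_of_abs_le_of_half_le hs hρa hψ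
      _ ≤ _ := by gcongr; exact le_add_of_nonneg_left (sq_nonneg c₁)

/-- Pointwise multiplier estimate: if `|1 − ψ̂_ρ(ℓ)| ≤ c₁ (ρℓ)^σ` for `1 ≤ ℓ ≤ ⌊ρ⁻¹−1⌋` and
`|ψ̂_ρ(ℓ)| ≤ c₂` beyond, then `(1+ℓ(ℓ+1))^τ |1−ψ̂_ρ(ℓ)|² ≤ C ρ^{2(σ−τ)} (1+ℓ(ℓ+1))^σ`
for a constant `C = C(c₁, c₂, σ, τ)` independent of `ρ`. -/
theorem multiplier_pointwise_estimate (σ τ c₁ c₂ : ℝ)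
    (hσ : 0 ≤ σ) (hτ0 : 0 ≤ τ) (hτσ : τ ≤ σ) (hc₁ : 0 < c₁) (hc₂ : 0 < c₂) :
    ∃ C : ℝ, 0 < C ∧ ∀ ρ : ℝ, 0 < ρ → ρ < 1 → ∀ ψ : ℕ → ℝ,
      (∀ ℓ : ℕ, 1 ≤ ℓ → ℓ ≤ ⌊ρ⁻¹ - 1⌋₊ → |1 - ψ ℓ| ≤ c₁ * (ρ * ℓ) ^ σ) →
      (∀ ℓ : ℕ, ⌊ρ⁻¹ - 1⌋₊ < ℓ → |ψ ℓ| ≤ c₂) →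
      ∀ ℓ : ℕ, 1 ≤ ℓ →
        (1 + (ℓ : ℝ) * (ℓ + 1)) ^ τ * |1 - ψ ℓ| ^ 2 ≤
          C * ρ ^ (2 * (σ - τ)) * (1 + (ℓ : ℝ) * (ℓ + 1)) ^ σ :=
  multiplier_pointwise_estimate_general σ τ c₁ c₂ hτ0 hτσ hc₁
end

section
/- Let σ > 1 and 0 < ρ < 1, and set ℓ_ρ = ⌊ρ^{-1} − 1⌋. Suppose real numbers b_ℓ satisfy |b_ℓ| ≤ c₁ (ρℓ)^σ for 1 ≤ ℓ ≤ ℓ_ρ and |b_ℓ| ≤ c₂ for ℓ > ℓ_ρ. Then the series S_ρ = Σ_{ℓ≥1} ℓ (1+ℓ²)^{-σ} b_ℓ² converges and S_ρ ≤ C ρ^{2(σ−1)} for a constant C independent of ρ. -/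
/-!
Split the series at `N = ⌊ρ⁻¹ - 1⌋`. Since `ℓ (1 + ℓ²)^(-σ) ≤ ℓ^(1 - 2σ)`, a low-frequency term
is at most `c₁² ρ^(2σ) ℓ ≤ c₁² ρ^(2σ - 1)`, and there are `N + 1 ≤ ρ⁻¹` of them. A high-frequency
term is at most `c₂² ℓ^(-1 - q)` with `q = 2(σ - 1) > 0`; Bernoulli's inequality bounds
`q (x + 1)^(-1 - q)` by the increment `x^(-q) - (x + 1)^(-q)`, so the tail telescopes to
`O((N + 1)^(-q))`, which is `O(ρ^q)` because `ρ⁻¹ ≤ 2 (N + 1)`.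
-/

open Real Finset

theorem mul_rpow_neg_one_sub_le_rpow_neg_sub {q x : ℝ} (hq : 0 ≤ q) (hx : 0 < x) :
    q * (x + 1) ^ (-1 - q) ≤ x ^ (-q) - (x + 1) ^ (-q) := by
  have bernoulli : 1 + (1 + q) * x⁻¹ ≤ (1 + x⁻¹) ^ (1 + q) :=
    one_add_mul_self_le_rpow_one_add (by linarith [inv_pos.2 hx]) (by linarith)
  have hx1 : 0 < x + 1 := by linarith
  rw [show 1 + x⁻¹ = (x + 1) / x by field_simp, div_rpow hx1.le hx.le,
    rpow_one_add' hx.le (by linarith), rpow_one_add' hx1.le (by linarith),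
    le_div_iff₀ (by positivity)] at bernoulli
  rw [show -1 - q = -(1 + q) by ring, rpow_neg hx.le, rpow_neg hx1.le, rpow_neg hx1.le,
    rpow_one_add' hx1.le (by linarith)]
  field_simp at bernoulli ⊢
  linarith

theorem sum_range_add_one_rpow_neg_one_sub_le {q x : ℝ} (hq : 0 < q) (hx : 0 < x) (n : ℕ) :
    ∑ i ∈ range n, (x + i + 1) ^ (-1 - q) ≤ x ^ (-q) / q := by
  rw [le_div_iff₀ hq, sum_mul]
  calc ∑ i ∈ range n, (x + i + 1) ^ (-1 - q) * q
      ≤ ∑ i ∈ range n, ((x + i) ^ (-q) - (x + ↑(i + 1)) ^ (-q)) := by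
        gcongr with i
        rw [mul_comm, Nat.cast_succ, ← add_assoc]
        exact mul_rpow_neg_one_sub_le_rpow_neg_sub hq.le (by positivity)
    _ = x ^ (-q) - (x + n) ^ (-q) := by
        rw [sum_range_sub' (fun i : ℕ => (x + i) ^ (-q)), Nat.cast_zero, add_zero]
    _ ≤ x ^ (-q) := sub_le_self _ (by positivity)

theorem sum_range_rpow_neg_one_sub_le {q x : ℝ} (hq : 0 < q) (hx : 1 ≤ x) (n : ℕ) :
    ∑ i ∈ range n, (x + i) ^ (-1 - q) ≤ (1 + q⁻¹) * x ^ (-q) := by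
  have hx0 : 0 < x := by linarith
  cases n with
  | zero => simp only [range_zero, sum_empty]; positivity
  | succ n =>
    rw [sum_range_succ', Nat.cast_zero, add_zero, add_mul, one_mul, add_comm, inv_mul_eq_div]
    gcongr
    · linarith
    · simpa only [Nat.cast_succ, ← add_assoc] using
        sum_range_add_one_rpow_neg_one_sub_le hq hx0 n

theorem mul_one_add_sq_rpow_neg_le {x σ : ℝ} (hx : 0 ≤ x) (hσ : 0 ≤ σ) :
    x * (1 + x ^ 2) ^ (-σ) ≤ x ^ (1 - 2 * σ) := by
  rcases hx.eq_or_lt with rfl | hx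
  · rw [zero_mul]; positivity
  calc x * (1 + x ^ 2) ^ (-σ) ≤ x * (x ^ 2) ^ (-σ) :=
        mul_le_mul_of_nonneg_left
          (rpow_le_rpow_of_nonpos (by positivity) (by linarith) (by linarith)) hx.le
    _ = x ^ (1 - 2 * σ) := by
        rw [← rpow_natCast, ← rpow_mul hx.le, sub_eq_add_neg, rpow_add hx, rpow_one]
        push_cast; ring_nf

theorem mul_one_add_sq_rpow_neg_mul_sq_le_of_abs_le_mul_rpow {x ρ σ c b : ℝ} (hx : 0 < x)
    (hρ : 0 ≤ ρ) (hσ : 0 ≤ σ) (hb : |b| ≤ c * (ρ * x) ^ σ) :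
    x * (1 + x ^ 2) ^ (-σ) * b ^ 2 ≤ c ^ 2 * ρ ^ (2 * σ) * x := by
  have hb2 : b ^ 2 ≤ c ^ 2 * (ρ * x) ^ (2 * σ) := by
    calc b ^ 2 = |b| ^ 2 := (sq_abs b).symm
      _ ≤ (c * (ρ * x) ^ σ) ^ 2 := pow_le_pow_left₀ (abs_nonneg b) hb 2
      _ = c ^ 2 * (ρ * x) ^ (2 * σ) := by
        rw [mul_pow, ← rpow_mul_natCast (by positivity)]; ring_nf
  calc x * (1 + x ^ 2) ^ (-σ) * b ^ 2 ≤ x ^ (1 - 2 * σ) * (c ^ 2 * (ρ * x) ^ (2 * σ)) :=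
        mul_le_mul (mul_one_add_sq_rpow_neg_le hx.le hσ) hb2 (sq_nonneg b) (by positivity)
    _ = c ^ 2 * ρ ^ (2 * σ) * (x ^ (1 - 2 * σ) * x ^ (2 * σ)) := by
        rw [mul_rpow hρ hx.le]; ring
    _ = c ^ 2 * ρ ^ (2 * σ) * x := by rw [← rpow_add hx, sub_add_cancel, rpow_one]

theorem mul_one_add_sq_rpow_neg_mul_sq_le_of_abs_le {x σ c b : ℝ} (hx : 0 ≤ x) (hσ : 0 ≤ σ)
    (hb : |b| ≤ c) : x * (1 + x ^ 2) ^ (-σ) * b ^ 2 ≤ c ^ 2 * x ^ (1 - 2 * σ) := by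
  rw [mul_comm (c ^ 2)]
  exact mul_le_mul (mul_one_add_sq_rpow_neg_le hx hσ) (sq_le_sq.2 (hb.trans (le_abs_self c)))
    (sq_nonneg b) (by positivity)

theorem sum_range_low_frequency_le {σ c ρ : ℝ} (hσ : 0 ≤ σ) (hρ : 0 < ρ) {N : ℕ}
    (hN : (N : ℝ) + 1 ≤ ρ⁻¹) {b : ℕ → ℝ}
    (hb : ∀ ℓ : ℕ, 1 ≤ ℓ → ℓ ≤ N → |b ℓ| ≤ c * (ρ * ℓ) ^ σ) :
    ∑ ℓ ∈ range (N + 1), (ℓ : ℝ) * (1 + (ℓ : ℝ) ^ 2) ^ (-σ) * b ℓ ^ 2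
      ≤ c ^ 2 * ρ ^ (2 * (σ - 1)) := by
  have hterm : ∀ ℓ ∈ range (N + 1),
      (ℓ : ℝ) * (1 + (ℓ : ℝ) ^ 2) ^ (-σ) * b ℓ ^ 2 ≤ c ^ 2 * ρ ^ (2 * σ) * ρ⁻¹ := by
    intro ℓ hℓ
    rcases Nat.eq_zero_or_pos ℓ with rfl | hℓ0
    · rw [Nat.cast_zero, zero_mul, zero_mul]; positivity
    have hℓN : ℓ ≤ N := Nat.lt_succ_iff.1 (mem_range.1 hℓ)
    have hℓρ : (ℓ : ℝ) ≤ ρ⁻¹ := by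
      have : (ℓ : ℝ) ≤ N := by exact_mod_cast hℓN
      linarith
    calc (ℓ : ℝ) * (1 + (ℓ : ℝ) ^ 2) ^ (-σ) * b ℓ ^ 2 ≤ c ^ 2 * ρ ^ (2 * σ) * ℓ :=
          mul_one_add_sq_rpow_neg_mul_sq_le_of_abs_le_mul_rpow (by exact_mod_cast hℓ0) hρ.le hσ
            (hb ℓ hℓ0 hℓN)
      _ ≤ c ^ 2 * ρ ^ (2 * σ) * ρ⁻¹ := by gcongr
  calc ∑ ℓ ∈ range (N + 1), (ℓ : ℝ) * (1 + (ℓ : ℝ) ^ 2) ^ (-σ) * b ℓ ^ 2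
      ≤ (N + 1 : ℕ) • (c ^ 2 * ρ ^ (2 * σ) * ρ⁻¹) := by
        simpa only [card_range] using sum_le_card_nsmul _ _ _ hterm
    _ ≤ ρ⁻¹ * (c ^ 2 * ρ ^ (2 * σ) * ρ⁻¹) := by
        rw [nsmul_eq_mul, Nat.cast_succ]; gcongr
    _ = c ^ 2 * ρ ^ (2 * (σ - 1)) := by
        rw [show 2 * (σ - 1) = 2 * σ - 2 by ring, rpow_sub hρ, rpow_two]; field_simp

theorem sum_range_high_frequency_le {σ c ρ : ℝ} (hσ : 1 < σ) (hρ : 0 < ρ) {N : ℕ}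
    (hN : ρ⁻¹ ≤ 2 * ((N : ℝ) + 1)) {b : ℕ → ℝ} (hb : ∀ ℓ : ℕ, N < ℓ → |b ℓ| ≤ c) (n : ℕ) :
    ∑ i ∈ range n, ((i + (N + 1) : ℕ) : ℝ) * (1 + ((i + (N + 1) : ℕ) : ℝ) ^ 2) ^ (-σ)
        * b (i + (N + 1)) ^ 2
      ≤ (1 + (2 * (σ - 1))⁻¹) * 2 ^ (2 * (σ - 1)) * c ^ 2 * ρ ^ (2 * (σ - 1)) := by
  set q := 2 * (σ - 1)
  have hq0 : 0 < q := by linarith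
  have hscale : ((N : ℝ) + 1) ^ (-q) ≤ 2 ^ q * ρ ^ q := by
    calc ((N : ℝ) + 1) ^ (-q) ≤ (ρ⁻¹ / 2) ^ (-q) :=
          rpow_le_rpow_of_nonpos (by positivity) (by linarith) (by linarith)
      _ = 2 ^ q * ρ ^ q := by
          rw [rpow_neg (by positivity), ← inv_rpow (by positivity), inv_div, div_inv_eq_mul,
            mul_rpow zero_le_two hρ.le]
  calc ∑ i ∈ range n, ((i + (N + 1) : ℕ) : ℝ) * (1 + ((i + (N + 1) : ℕ) : ℝ) ^ 2) ^ (-σ)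
        * b (i + (N + 1)) ^ 2
      ≤ ∑ i ∈ range n, c ^ 2 * ((N + 1 : ℝ) + i) ^ (-1 - q) := by
        refine sum_le_sum fun i _ => ?_
        have hℓ : ((i + (N + 1) : ℕ) : ℝ) = (N + 1 : ℝ) + i := by push_cast; ring
        rw [show -1 - q = 1 - 2 * σ by ring, ← hℓ]
        exact mul_one_add_sq_rpow_neg_mul_sq_le_of_abs_le (Nat.cast_nonneg _) (by linarith)
          (hb (i + (N + 1)) (by omega))
    _ = c ^ 2 * ∑ i ∈ range n, ((N + 1 : ℝ) + i) ^ (-1 - q) := (mul_sum _ _ _).symm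
    _ ≤ c ^ 2 * ((1 + q⁻¹) * (2 ^ q * ρ ^ q)) := by
        gcongr
        calc ∑ i ∈ range n, ((N + 1 : ℝ) + i) ^ (-1 - q) ≤ (1 + q⁻¹) * ((N : ℝ) + 1) ^ (-q) :=
              sum_range_rpow_neg_one_sub_le hq0 (by linarith [N.cast_nonneg (α := ℝ)]) n
          _ ≤ (1 + q⁻¹) * (2 ^ q * ρ ^ q) := by gcongr
    _ = (1 + q⁻¹) * 2 ^ q * c ^ 2 * ρ ^ q := by ring

theorem low_high_frequency_sum_estimate_general (σ c₁ c₂ : ℝ)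
    (hσ : 1 < σ) (hc₂ : 0 < c₂) :
    ∃ C : ℝ, 0 < C ∧ ∀ ρ : ℝ, 0 < ρ → ρ < 1 → ∀ b : ℕ → ℝ,
      (∀ ℓ : ℕ, 1 ≤ ℓ → ℓ ≤ ⌊ρ⁻¹ - 1⌋₊ → |b ℓ| ≤ c₁ * (ρ * ℓ) ^ σ) →
      (∀ ℓ : ℕ, ⌊ρ⁻¹ - 1⌋₊ < ℓ → |b ℓ| ≤ c₂) →
      Summable (fun ℓ : ℕ => (ℓ : ℝ) * (1 + (ℓ : ℝ) ^ 2) ^ (-σ) * b ℓ ^ 2) ∧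
      ∑' ℓ : ℕ, (ℓ : ℝ) * (1 + (ℓ : ℝ) ^ 2) ^ (-σ) * b ℓ ^ 2 ≤ C * ρ ^ (2 * (σ - 1)) := by
  set q := 2 * (σ - 1)
  refine ⟨c₁ ^ 2 + (1 + q⁻¹) * 2 ^ q * c₂ ^ 2, by positivity, ?_⟩
  intro ρ hρ hρ1 b hlow hhigh
  set N := ⌊ρ⁻¹ - 1⌋₊
  have hN_le : (N : ℝ) + 1 ≤ ρ⁻¹ := by
    linarith [Nat.floor_le (a := ρ⁻¹ - 1) (by linarith [one_lt_inv₀ hρ |>.2 hρ1])]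
  have hN_ge : ρ⁻¹ ≤ 2 * ((N : ℝ) + 1) := by
    linarith [Nat.lt_floor_add_one (ρ⁻¹ - 1), N.cast_nonneg (α := ℝ)]
  set f := fun ℓ : ℕ => (ℓ : ℝ) * (1 + (ℓ : ℝ) ^ 2) ^ (-σ) * b ℓ ^ 2
  have hf_nonneg : ∀ ℓ, 0 ≤ f ℓ := fun ℓ => by positivity
  have htail := sum_range_high_frequency_le hσ hρ hN_ge hhigh
  have hf : Summable f :=
    (summable_nat_add_iff (N + 1)).1 (summable_of_sum_range_le (fun _ => hf_nonneg _) htail)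
  refine ⟨hf, ?_⟩
  rw [← hf.sum_add_tsum_nat_add (N + 1)]
  calc ∑ ℓ ∈ range (N + 1), f ℓ + ∑' i, f (i + (N + 1))
      ≤ c₁ ^ 2 * ρ ^ q + (1 + q⁻¹) * 2 ^ q * c₂ ^ 2 * ρ ^ q :=
        add_le_add (sum_range_low_frequency_le (by linarith) hρ hN_le hlow)
          (Real.tsum_le_of_sum_range_le (fun _ => hf_nonneg _) htail)
    _ = (c₁ ^ 2 + (1 + q⁻¹) * 2 ^ q * c₂ ^ 2) * ρ ^ q := by ring

/-- Core summation estimate for the `L∞` error bound: if `σ > 1`,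
`|b_ℓ| ≤ c₁ (ρℓ)^σ` for `1 ≤ ℓ ≤ ⌊ρ⁻¹−1⌋` and `|b_ℓ| ≤ c₂` beyond, then
`S_ρ = Σ_{ℓ≥1} ℓ (1+ℓ²)^{-σ} b_ℓ²` converges and `S_ρ ≤ C ρ^{2(σ−1)}` with `C`
independent of `ρ`. -/
theorem low_high_frequency_sum_estimate (σ c₁ c₂ : ℝ)
    (hσ : 1 < σ) (hc₁ : 0 < c₁) (hc₂ : 0 < c₂) :
    ∃ C : ℝ, 0 < C ∧ ∀ ρ : ℝ, 0 < ρ → ρ < 1 → ∀ b : ℕ → ℝ,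
      (∀ ℓ : ℕ, 1 ≤ ℓ → ℓ ≤ ⌊ρ⁻¹ - 1⌋₊ → |b ℓ| ≤ c₁ * (ρ * ℓ) ^ σ) →
      (∀ ℓ : ℕ, ⌊ρ⁻¹ - 1⌋₊ < ℓ → |b ℓ| ≤ c₂) →
      Summable (fun ℓ : ℕ => (ℓ : ℝ) * (1 + (ℓ : ℝ) ^ 2) ^ (-σ) * b ℓ ^ 2) ∧
      ∑' ℓ : ℕ, (ℓ : ℝ) * (1 + (ℓ : ℝ) ^ 2) ^ (-σ) * b ℓ ^ 2 ≤ C * ρ ^ (2 * (σ - 1)) :=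
  low_high_frequency_sum_estimate_general σ c₁ c₂ hσ hc₂
end
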